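/- arXiv:1904.03960 — 5 statements merged into one kernel-verified Lean document; each statement's English description precedes it below -/
import Mathlib

section
/- For every complex number z with Re(z) < 1 and every real u ≥ 0, one has |(1+u)^(z-1) - 1| ≤ u·|z-1|. -/
/-! By the mean value inequality on `[1, x]`, `‖x ^ w - 1‖` is at most `x - 1` times the supremum
of `‖w * t ^ (w - 1)‖ = ‖w‖ * t ^ (re w - 1)` over `t ∈ [1, x]`, which is `‖w‖` as soon as
`re w ≤ 1`. -/

open Complex Set

theorem hasDerivAt_ofReal_cpow_const_of_pos {x : ℝ} (hx : 0 < x) (w : ℂ) :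
    HasDerivAt (fun t : ℝ => (t : ℂ) ^ w) (w * (x : ℂ) ^ (w - 1)) x :=
  (hasStrictDerivAt_cpow_const (ofReal_mem_slitPlane.2 hx)).hasDerivAt.comp_ofReal

theorem norm_ofReal_cpow_le_one {t : ℝ} (ht : 1 ≤ t) {w : ℂ} (hw : w.re ≤ 0) :
    ‖(t : ℂ) ^ w‖ ≤ 1 := by
  rw [norm_cpow_eq_rpow_re_of_pos (by linarith)]
  exact Real.rpow_le_one_of_one_le_of_nonpos ht hw

theorem norm_ofReal_cpow_sub_one_le {x : ℝ} (hx : 1 ≤ x) {w : ℂ} (hw : w.re ≤ 1) :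
    ‖(x : ℂ) ^ w - 1‖ ≤ ‖w‖ * (x - 1) := by
  have hderiv : ∀ t ∈ Icc 1 x, HasDerivWithinAt (fun t : ℝ => (t : ℂ) ^ w)
      (w * (t : ℂ) ^ (w - 1)) (Icc 1 x) t := fun t ht =>
    (hasDerivAt_ofReal_cpow_const_of_pos (by linarith [ht.1]) w).hasDerivWithinAt
  have hbound : ∀ t ∈ Ico 1 x, ‖w * (t : ℂ) ^ (w - 1)‖ ≤ ‖w‖ := fun t ht => by
    rw [norm_mul]
    exact mul_le_of_le_one_right (norm_nonneg w)
      (norm_ofReal_cpow_le_one ht.1 (by simpa using hw))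
  simpa using norm_image_sub_le_of_norm_deriv_le_segment' hderiv hbound x (right_mem_Icc.2 hx)

/-- For every complex `z` with `Re z < 1` and real `u ≥ 0`,
`|(1+u)^(z-1) - 1| ≤ u * |z-1|` (principal branch). -/
theorem stmt_0 (z : ℂ) (hz : z.re < 1) (u : ℝ) (hu : 0 ≤ u) :
    ‖(((1 + u : ℝ)) : ℂ) ^ (z - 1) - 1‖ ≤ u * ‖z - 1‖ := by
  have h := norm_ofReal_cpow_sub_one_le (x := 1 + u) (by linarith) (w := z - 1)
    (by simp only [sub_re, one_re]; linarith)
  rwa [add_sub_cancel_left, mul_comm] at h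
end

section
/- Define the Cesàro operator C on functions f : (0,1) → ℂ by (Cf)(x) = (1/x) ∫₀ˣ f(s) ds. Then for every n ≥ 1 and every f ∈ L^p(0,1) with 1 < p < ∞, the n-th power of C is given by (Cⁿf)(x) = (1/(x·(n-1)!)) ∫₀ˣ (log(x/t))^(n-1) f(t) dt for almost every x ∈ (0,1). -/
/-!
Induction on `n`: `Cⁿ⁺¹g(x) = x⁻¹ ∫₀ˣ Cⁿg`, and after inserting the formula for `Cⁿg` the order
of integration over the triangle `0 < t < y < x` is exchanged; the inner integral is
`∫ₜˣ y⁻¹ log (y/t)ⁿ dy = log (x/t)ⁿ⁺¹ / (n+1)`. Fubini applies because `log (x/·)ᵏ` lies in every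
`Lᵠ(0,x)` with `q < ∞`, so by Hölder `log (x/t)ᵏ g(t)` is integrable whenever `g ∈ Lᵖ`, `p > 1`.
-/

open MeasureTheory Set Real Function
open scoped ENNReal

lemma integrableOn_abs_log_div_rpow (x : ℝ) {r : ℝ} (hr : 0 ≤ r) :
    IntegrableOn (fun t => |log (x / t)| ^ r) (Ioo 0 x) := by
  rcases le_or_gt x 0 with hx | hx
  · simp [Ioo_eq_empty_of_le hx]
  -- `log u ≤ u ^ ε / ε` with `ε r < 1` dominates the integrand by a multiple of `t ^ (-ε r)`
  set ε : ℝ := (r + 1)⁻¹ with hε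
  have hε0 : 0 < ε := by positivity
  have hεr : ε * r < 1 := by rw [hε, inv_mul_lt_iff₀ (by linarith)]; linarith
  have hdom : IntegrableOn (fun t => ε⁻¹ ^ r * (x / t) ^ (ε * r)) (Ioo 0 x) := by
    have h : IntegrableOn (fun t => ε⁻¹ ^ r * x ^ (ε * r) * t ^ (-(ε * r))) (Ioo 0 x) :=
      ((intervalIntegral.integrableOn_Ioo_rpow_iff hx).2 (by linarith)).const_mul _
    refine h.congr_fun (fun t ht => ?_) measurableSet_Ioo
    simp only [div_rpow hx.le ht.1.le, rpow_neg ht.1.le]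
    ring
  refine hdom.mono' (by fun_prop : Measurable _).aestronglyMeasurable
    ((ae_restrict_iff' measurableSet_Ioo).2 (.of_forall fun t ⟨ht, htx⟩ => ?_))
  have hlog : 0 ≤ log (x / t) := log_nonneg ((one_le_div ht).2 htx.le)
  calc ‖|log (x / t)| ^ r‖ = log (x / t) ^ r := by
        rw [abs_of_nonneg hlog, norm_of_nonneg (rpow_nonneg hlog r)]
    _ ≤ ((x / t) ^ ε / ε) ^ r := rpow_le_rpow hlog (log_le_rpow_div (by positivity) hε0) hr
    _ = ε⁻¹ ^ r * (x / t) ^ (ε * r) := by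
        rw [div_eq_mul_inv, mul_rpow (by positivity) (by positivity), ← rpow_mul (by positivity)]
        ring

lemma memLp_log_div_pow (x : ℝ) (k : ℕ) {q : ℝ≥0∞} (hq : q ≠ ∞) :
    MemLp (fun t => log (x / t) ^ k) q (volume.restrict (Ioo 0 x)) := by
  have hmeas : AEStronglyMeasurable (fun t => log (x / t) ^ k) (volume.restrict (Ioo 0 x)) :=
    (by fun_prop : Measurable _).aestronglyMeasurable
  rcases eq_or_ne q 0 with rfl | hq0
  · exact memLp_zero_iff_aestronglyMeasurable.2 hmeas
  rw [← integrable_norm_rpow_iff hmeas hq0 hq]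
  simp_rw [norm_pow, Real.norm_eq_abs, ← rpow_natCast, ← rpow_mul (abs_nonneg _)]
  exact integrableOn_abs_log_div_rpow x (by positivity)

lemma integrableOn_log_div_pow_mul {p : ℝ≥0∞} (hp : 1 < p) {x : ℝ} {g : ℝ → ℂ}
    (hg : MemLp g p (volume.restrict (Ioo 0 x))) (k : ℕ) :
    IntegrableOn (fun t => ((log (x / t) ^ k : ℝ) : ℂ) * g t) (Ioo 0 x) := by
  have : p.HolderConjugate p.conjExponent := .conjExponent hp.le
  have hq : p.conjExponent ≠ ∞ := by
    simp [ENNReal.conjExponent, (tsub_pos_of_lt hp).ne']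
  have h := hg.smul (r := 1) (memLp_log_div_pow x k hq)
  rw [memLp_one_iff_integrable] at h
  exact h.congr (.of_forall fun t => Complex.real_smul)

lemma continuousOn_inv_mul_log_div_pow {t : ℝ} (ht : t ≠ 0) (n : ℕ) :
    ContinuousOn (fun y => y⁻¹ * log (y / t) ^ n) {0}ᶜ :=
  continuousOn_inv₀.mul <| (continuousOn_log.comp (continuousOn_id.div_const t)
    fun _ hy => div_ne_zero hy ht).pow n

lemma integral_inv_mul_log_div_pow {t x : ℝ} (ht : 0 < t) (hx : 0 < x) (n : ℕ) :
    ∫ y in t..x, y⁻¹ * log (y / t) ^ n = log (x / t) ^ (n + 1) / (n + 1) := by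
  have hpos : ∀ y ∈ uIcc t x, 0 < y := fun y hy => (lt_min ht hx).trans_le hy.1
  have hderiv : ∀ y ∈ uIcc t x, HasDerivAt (fun y => log (y / t) ^ (n + 1) / (n + 1))
      (y⁻¹ * log (y / t) ^ n) y := by
    intro y hy
    have hy0 := (hpos y hy).ne'
    have hlog : HasDerivAt (fun y => log (y / t)) y⁻¹ y := by
      convert ((hasDerivAt_id' y).div_const t).log (div_ne_zero hy0 ht.ne') using 1
      field_simp
    refine ((hlog.fun_pow (n + 1)).div_const ((n : ℝ) + 1)).congr_deriv ?_
    field_simp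
    push_cast
    ring
  have hcont := (continuousOn_inv_mul_log_div_pow ht.ne' n).mono fun y hy => (hpos y hy).ne'
  rw [intervalIntegral.integral_eq_sub_of_hasDerivAt hderiv hcont.intervalIntegrable,
    div_self ht.ne', log_one]
  simp

section Triangle

variable {E : Type*} [NormedAddCommGroup E] [NormedSpace ℝ E]

lemma integral_Ioo_integral_Ioo_comm {a b : ℝ} {F : ℝ → ℝ → E}
    (hmeas : AEStronglyMeasurable (uncurry F)
      ((volume.prod volume).restrict {q : ℝ × ℝ | a < q.1 ∧ q.1 < q.2 ∧ q.2 < b}))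
    (hslice : ∀ t ∈ Ioo a b, IntegrableOn (F t) (Ioo t b))
    (hnorm : IntegrableOn (fun t => ∫ y in Ioo t b, ‖F t y‖) (Ioo a b)) :
    ∫ y in Ioo a b, ∫ t in Ioo a y, F t y = ∫ t in Ioo a b, ∫ y in Ioo t b, F t y := by
  set T : Set (ℝ × ℝ) := {q | a < q.1 ∧ q.1 < q.2 ∧ q.2 < b}
  have hT : MeasurableSet T :=
    (measurableSet_lt measurable_const measurable_fst).inter
      ((measurableSet_lt measurable_fst measurable_snd).inter
        (measurableSet_lt measurable_snd measurable_const))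
  set G : ℝ → ℝ → E := fun t y => T.indicator (uncurry F) (t, y)
  have hG_left (t : ℝ) : G t = if t ∈ Ioo a b then (Ioo t b).indicator (F t) else 0 := by
    have hT_left (y : ℝ) : (t, y) ∈ T ↔ t ∈ Ioo a b ∧ y ∈ Ioo t b :=
      ⟨fun ⟨h1, h2, h3⟩ => ⟨⟨h1, h2.trans h3⟩, h2, h3⟩, fun ⟨⟨h1, _⟩, h2, h3⟩ => ⟨h1, h2, h3⟩⟩
    ext y
    split_ifs with ht <;> simp [G, indicator_apply, hT_left, ht]
  have hG_right (y : ℝ) : (G · y) = if y ∈ Ioo a b then (Ioo a y).indicator (F · y) else 0 := by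
    have hT_right (t : ℝ) : (t, y) ∈ T ↔ y ∈ Ioo a b ∧ t ∈ Ioo a y :=
      ⟨fun ⟨h1, h2, h3⟩ => ⟨⟨h1.trans h2, h3⟩, h1, h2⟩, fun ⟨⟨_, h3⟩, h1, h2⟩ => ⟨h1, h2, h3⟩⟩
    ext t
    split_ifs with hy <;> simp [G, indicator_apply, hT_right, hy]
  have hG : Integrable (uncurry G) (volume.prod volume) := by
    have hGm : AEStronglyMeasurable (uncurry G) (volume.prod volume) :=
      (aestronglyMeasurable_indicator_iff hT).2 hmeas
    refine (integrable_prod_iff hGm).2 ⟨.of_forall fun t => ?_, ?_⟩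
    · show Integrable (G t)
      by_cases ht : t ∈ Ioo a b
      · simpa [hG_left, ht, integrable_indicator_iff measurableSet_Ioo] using hslice t ht
      · simp [hG_left, ht]
    · refine ((integrable_indicator_iff measurableSet_Ioo).2 hnorm).congr (.of_forall fun t => ?_)
      show _ = ∫ y, ‖G t y‖
      by_cases ht : t ∈ Ioo a b
      · simp [hG_left, ht, norm_indicator_eq_indicator_norm, integral_indicator measurableSet_Ioo]
      · simp [hG_left, ht]
  have h_left : (fun t => ∫ y, G t y) = (Ioo a b).indicator (fun t => ∫ y in Ioo t b, F t y) := by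
    ext t
    by_cases ht : t ∈ Ioo a b <;> simp [hG_left, ht, integral_indicator measurableSet_Ioo]
  have h_right : (fun y => ∫ t, G t y) = (Ioo a b).indicator (fun y => ∫ t in Ioo a y, F t y) := by
    ext y
    show ∫ t, (G · y) t = _
    by_cases hy : y ∈ Ioo a b <;> simp [hG_right, hy, integral_indicator measurableSet_Ioo]
  have h := integral_integral_swap hG
  rw [h_left, h_right, integral_indicator measurableSet_Ioo,
    integral_indicator measurableSet_Ioo] at h
  exact h.symm

end Triangle

lemma integral_inv_mul_integral_log_div_pow {g : ℝ → ℂ} {x : ℝ} (hx : 0 < x)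
    (hg : AEStronglyMeasurable g (volume.restrict (Ioo 0 x))) (n : ℕ)
    (hint : IntegrableOn (fun t => ((log (x / t) ^ (n + 1) : ℝ) : ℂ) * g t) (Ioo 0 x)) :
    ∫ y in Ioo 0 x, (y : ℂ)⁻¹ * ∫ t in Ioo 0 y, ((log (y / t) ^ n : ℝ) : ℂ) * g t
      = ((n : ℂ) + 1)⁻¹ * ∫ t in Ioo 0 x, ((log (x / t) ^ (n + 1) : ℝ) : ℂ) * g t := by
  set F : ℝ → ℝ → ℂ := fun t y => ((y⁻¹ * log (y / t) ^ n : ℝ) : ℂ) * g t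
  have hkernel_int {t : ℝ} (ht : t ∈ Ioo 0 x) :
      ∫ y in Ioo t x, y⁻¹ * log (y / t) ^ n = log (x / t) ^ (n + 1) / (n + 1) := by
    rw [← integral_Ioc_eq_integral_Ioo, ← intervalIntegral.integral_of_le ht.2.le,
      integral_inv_mul_log_div_pow ht.1 hx]
  have hmeas : AEStronglyMeasurable (uncurry F)
      ((volume.prod volume).restrict {q : ℝ × ℝ | 0 < q.1 ∧ q.1 < q.2 ∧ q.2 < x}) := by
    have hg_fst := hg.comp_fst (ν := (volume : Measure ℝ))
    rw [Measure.restrict_prod_eq_prod_univ] at hg_fst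
    refine (by fun_prop : Measurable fun q : ℝ × ℝ =>
      ((q.2⁻¹ * log (q.2 / q.1) ^ n : ℝ) : ℂ)).aestronglyMeasurable.mul ?_
    have hsub : {q : ℝ × ℝ | 0 < q.1 ∧ q.1 < q.2 ∧ q.2 < x} ⊆ Ioo 0 x ×ˢ univ :=
      fun q hq => ⟨⟨hq.1, hq.2.1.trans hq.2.2⟩, trivial⟩
    exact hg_fst.mono_measure (Measure.restrict_mono hsub le_rfl)
  have hslice : ∀ t ∈ Ioo 0 x, IntegrableOn (F t) (Ioo t x) := by
    intro t ht
    have hcont := (continuousOn_inv_mul_log_div_pow ht.1.ne' n).mono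
      fun y (hy : y ∈ Icc t x) => (ht.1.trans_le hy.1).ne'
    exact ((Complex.continuous_ofReal.comp_continuousOn hcont).integrableOn_Icc.mono_set
      Ioo_subset_Icc_self).mul_const (g t)
  have hnorm : IntegrableOn (fun t => ∫ y in Ioo t x, ‖F t y‖) (Ioo 0 x) := by
    refine IntegrableOn.congr_fun (hint.norm.div_const ((n : ℝ) + 1)) (fun t ht => ?_)
      measurableSet_Ioo
    have hkernel : ∀ y ∈ Ioo t x, 0 ≤ y⁻¹ * log (y / t) ^ n := fun y hy =>
      mul_nonneg (inv_nonneg.2 (ht.1.trans hy.1).le)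
        (pow_nonneg (log_nonneg ((one_le_div ht.1).2 hy.1.le)) n)
    rw [setIntegral_congr_fun measurableSet_Ioo fun y hy => by
      rw [norm_mul, Complex.norm_real, norm_of_nonneg (hkernel y hy)], integral_mul_const,
      hkernel_int ht, norm_mul, Complex.norm_real,
      norm_of_nonneg (pow_nonneg (log_nonneg ((one_le_div ht.1).2 ht.2.le)) _)]
    ring
  calc ∫ y in Ioo 0 x, (y : ℂ)⁻¹ * ∫ t in Ioo 0 y, ((log (y / t) ^ n : ℝ) : ℂ) * g t
      = ∫ y in Ioo 0 x, ∫ t in Ioo 0 y, F t y := by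
        refine setIntegral_congr_fun measurableSet_Ioo fun y _ => ?_
        rw [← integral_const_mul]
        push_cast [F]
        ring_nf
    _ = ∫ t in Ioo 0 x, ∫ y in Ioo t x, F t y := integral_Ioo_integral_Ioo_comm hmeas hslice hnorm
    _ = ∫ t in Ioo 0 x, ((log (x / t) ^ (n + 1) / (n + 1) : ℝ) : ℂ) * g t := by
        refine setIntegral_congr_fun measurableSet_Ioo fun t ht => ?_
        rw [integral_mul_const, integral_complex_ofReal, hkernel_int ht]
    _ = ((n : ℂ) + 1)⁻¹ * ∫ t in Ioo 0 x, ((log (x / t) ^ (n + 1) : ℝ) : ℂ) * g t := by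
        rw [← integral_const_mul]
        refine setIntegral_congr_fun measurableSet_Ioo fun t _ => ?_
        push_cast
        ring

noncomputable def cesaro (g : ℝ → ℂ) (x : ℝ) : ℂ := (x : ℂ)⁻¹ * ∫ s in (0 : ℝ)..x, g s

open Nat in
theorem cesaro_iterate_succ_eqOn {g : ℝ → ℂ} {b : ℝ}
    (hg : AEStronglyMeasurable g (volume.restrict (Ioo 0 b)))
    (hint : ∀ x ∈ Ioo 0 b, ∀ k : ℕ,
      IntegrableOn (fun t => ((log (x / t) ^ k : ℝ) : ℂ) * g t) (Ioo 0 x))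
    (n : ℕ) :
    EqOn (cesaro^[n + 1] g)
      (fun x => ((x : ℂ) * n !)⁻¹ * ∫ t in (0 : ℝ)..x, ((log (x / t) ^ n : ℝ) : ℂ) * g t)
      (Ioo 0 b) := by
  induction n with
  | zero =>
    intro x _
    simp [cesaro]
  | succ n ih =>
    intro x hx
    dsimp only
    have hg_x : AEStronglyMeasurable g (volume.restrict (Ioo 0 x)) :=
      hg.mono_measure (Measure.restrict_mono (Ioo_subset_Ioo le_rfl hx.2.le) le_rfl)
    have h_inner : ∫ y in Ioo 0 x,
          ((y : ℂ) * n !)⁻¹ * ∫ t in (0 : ℝ)..y, ((log (y / t) ^ n : ℝ) : ℂ) * g t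
        = (n ! : ℂ)⁻¹ * ∫ y in Ioo 0 x,
          (y : ℂ)⁻¹ * ∫ t in Ioo 0 y, ((log (y / t) ^ n : ℝ) : ℂ) * g t := by
      rw [← integral_const_mul]
      refine setIntegral_congr_fun measurableSet_Ioo fun y hy => ?_
      rw [intervalIntegral.integral_of_le hy.1.le, integral_Ioc_eq_integral_Ioo]
      push_cast
      ring
    rw [iterate_succ_apply', cesaro, intervalIntegral.integral_of_le hx.1.le,
      integral_Ioc_eq_integral_Ioo,
      setIntegral_congr_fun measurableSet_Ioo fun y hy => ih ⟨hy.1, hy.2.trans hx.2⟩, h_inner,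
      integral_inv_mul_integral_log_div_pow hx.1 hg_x n (hint x hx (n + 1)),
      intervalIntegral.integral_of_le hx.1.le, integral_Ioc_eq_integral_Ioo, factorial_succ]
    push_cast [mul_inv]
    ring

/-- Boyd's formula for the integer powers of the Cesàro operator on `L^p(0,1)`, `1 < p < ∞`. -/
theorem stmt_8 (p : ℝ) (hp : 1 < p) (f : ℝ → ℂ)
    (hf : MeasureTheory.MemLp f (ENNReal.ofReal p)
      (MeasureTheory.volume.restrict (Set.Ioo (0 : ℝ) 1)))
    (n : ℕ) (hn : 1 ≤ n) :
    ∀ᵐ x ∂(MeasureTheory.volume.restrict (Set.Ioo (0 : ℝ) 1)),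
      ((fun g : ℝ → ℂ => fun y : ℝ => ((y : ℂ))⁻¹ * ∫ s in (0 : ℝ)..y, g s)^[n] f) x
        = (1 / ((x * ((n - 1).factorial : ℝ)) : ℂ)) *
            ∫ t in (0 : ℝ)..x, ((Real.log (x / t) ^ (n - 1) : ℝ) : ℂ) * f t := by
  obtain ⟨m, rfl⟩ := Nat.exists_eq_add_of_le' hn
  have hint (x : ℝ) (hx : x ∈ Ioo (0 : ℝ) 1) (k : ℕ) :
      IntegrableOn (fun t => ((log (x / t) ^ k : ℝ) : ℂ) * f t) (Ioo 0 x) :=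
    integrableOn_log_div_pow_mul (ENNReal.one_lt_ofReal.2 hp)
      (hf.mono_measure (Measure.restrict_mono (Ioo_subset_Ioo le_rfl hx.2.le) le_rfl)) k
  filter_upwards [ae_restrict_mem measurableSet_Ioo] with x hx
  rw [Nat.add_sub_cancel, one_div, Complex.ofReal_natCast]
  exact cesaro_iterate_succ_eqOn hf.aestronglyMeasurable hint m hx
end

section
/- Let z ∈ ℂ with Re(z) > 0 and let f : [0,1] → ℂ be continuous with sup norm ‖f‖_∞. Then for every t ∈ [0,1], |(J(z)f)(t)| ≤ ‖f‖_∞ / (|Γ(z)| · Re(z)). Consequently the operator norm of J(z) on C[0,1] satisfies ‖J(z)‖ ≤ (1/|Γ(z+1)|) · |z|/Re(z). -/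
open Complex intervalIntegral

theorem norm_ofReal_cpow_le {x : ℝ} (hx : 0 ≤ x) (w : ℂ) : ‖(x : ℂ) ^ w‖ ≤ x ^ w.re := by
  simpa [arg_ofReal_of_nonneg hx, abs_of_nonneg hx] using norm_cpow_le (x : ℂ) w

theorem integral_sub_rpow_sub_one {a : ℝ} (ha : 0 < a) (t : ℝ) :
    ∫ s in (0 : ℝ)..t, (t - s) ^ (a - 1) = t ^ a / a := by
  rw [integral_comp_sub_left (fun x : ℝ => x ^ (a - 1)) t, sub_self, sub_zero,
    integral_rpow (Or.inl (by linarith)), sub_add_cancel, Real.zero_rpow ha.ne', sub_zero]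

theorem intervalIntegrable_sub_rpow_sub_one {a : ℝ} (ha : 0 < a) (t : ℝ) :
    IntervalIntegrable (fun s : ℝ => (t - s) ^ (a - 1)) MeasureTheory.volume 0 t := by
  have h : IntervalIntegrable (fun x : ℝ => x ^ (a - 1)) MeasureTheory.volume 0 t :=
    intervalIntegrable_rpow' (by linarith)
  simpa using (h.comp_sub_left t).symm

theorem norm_integral_cpow_sub_mul_le {z : ℂ} (hz : 0 < z.re) {f : ℝ → ℂ} {M t : ℝ}
    (ht : 0 ≤ t) (hM : ∀ s ∈ Set.Ioc 0 t, ‖f s‖ ≤ M) :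
    ‖∫ s in (0 : ℝ)..t, ((t - s : ℝ) : ℂ) ^ (z - 1) * f s‖ ≤ t ^ z.re / z.re * M := by
  calc ‖∫ s in (0 : ℝ)..t, ((t - s : ℝ) : ℂ) ^ (z - 1) * f s‖
      ≤ ∫ s in (0 : ℝ)..t, (t - s) ^ (z.re - 1) * M := by
        refine norm_integral_le_of_norm_le ht (Filter.Eventually.of_forall fun s hs => ?_)
          ((intervalIntegrable_sub_rpow_sub_one hz t).mul_const M)
        have hts : 0 ≤ t - s := sub_nonneg.mpr hs.2
        rw [norm_mul]
        exact mul_le_mul (by simpa using norm_ofReal_cpow_le hts (z - 1)) (hM s hs)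
          (norm_nonneg _) (Real.rpow_nonneg hts _)
    _ = t ^ z.re / z.re * M := by
        rw [intervalIntegral.integral_mul_const, integral_sub_rpow_sub_one hz]

theorem stmt_11_general (z : ℂ) (hz : 0 < z.re) (f : ℝ → ℂ)
    (M : ℝ) (hM : ∀ s ∈ Set.Icc (0 : ℝ) 1, ‖f s‖ ≤ M)
    (J : ℂ → (ℝ → ℂ) → ℝ → ℂ)
    (hJ : J = fun γ g t =>
      (1 / Complex.Gamma γ) * ∫ s in (0 : ℝ)..t, (((t - s : ℝ)) : ℂ) ^ (γ - 1) * g s) :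
    ∀ t ∈ Set.Icc (0 : ℝ) 1,
      ‖J z f t‖ ≤ M / (‖Complex.Gamma z‖ * z.re) ∧
      ‖J z f t‖ ≤
        (1 / ‖Complex.Gamma (z + 1)‖) * (‖z‖ / z.re) * M := by
  rintro t ⟨ht0, ht1⟩
  have hM0 : 0 ≤ M := (norm_nonneg _).trans (hM 0 ⟨le_rfl, zero_le_one⟩)
  have hint : ‖∫ s in (0 : ℝ)..t, ((t - s : ℝ) : ℂ) ^ (z - 1) * f s‖ ≤ M / z.re :=
    calc ‖∫ s in (0 : ℝ)..t, ((t - s : ℝ) : ℂ) ^ (z - 1) * f s‖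
      _ ≤ t ^ z.re / z.re * M :=
          norm_integral_cpow_sub_mul_le hz ht0 fun s hs => hM s ⟨hs.1.le, hs.2.trans ht1⟩
      _ ≤ 1 / z.re * M := by gcongr; exact Real.rpow_le_one ht0 ht1 hz.le
      _ = M / z.re := by ring
  have hJt : ‖J z f t‖ ≤ M / (‖Gamma z‖ * z.re) := by
    rw [hJ, norm_mul, norm_div, norm_one, one_div_mul_eq_div, mul_comm ‖Gamma z‖, ← div_div]
    exact div_le_div_of_nonneg_right hint (norm_nonneg _)
  refine ⟨hJt, hJt.trans_eq ?_⟩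
  have hz0 : z ≠ 0 := fun h => by simp [h] at hz
  rw [Gamma_add_one z hz0, norm_mul]
  field_simp

/-- Sup-norm bound for the Riemann–Liouville operator on `C[0,1]`:
`|(J(z)f)(t)| ≤ ‖f‖_∞/(|Γ(z)| Re z)` and hence
`|(J(z)f)(t)| ≤ (1/|Γ(z+1)|)·(|z|/Re z)·‖f‖_∞`. -/
theorem stmt_11 (z : ℂ) (hz : 0 < z.re) (f : ℝ → ℂ) (hf : ContinuousOn f (Set.Icc 0 1))
    (M : ℝ) (hM : ∀ s ∈ Set.Icc (0 : ℝ) 1, ‖f s‖ ≤ M)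
    (J : ℂ → (ℝ → ℂ) → ℝ → ℂ)
    (hJ : J = fun γ g t =>
      (1 / Complex.Gamma γ) * ∫ s in (0 : ℝ)..t, (((t - s : ℝ)) : ℂ) ^ (γ - 1) * g s) :
    ∀ t ∈ Set.Icc (0 : ℝ) 1,
      ‖J z f t‖ ≤ M / (‖Complex.Gamma z‖ * z.re) ∧
      ‖J z f t‖ ≤
        (1 / ‖Complex.Gamma (z + 1)‖) * (‖z‖ / z.re) * M :=
  stmt_11_general z hz f M hM J hJ
end

section
/- Let 0 < α < 1 and z ∈ ℂ with Re(z) > 0. For f : [0,1] → ℂ with f(0) = 0 and finite Hölder seminorm ‖f‖_α = sup_{t≠s} |f(t)-f(s)|/|t-s|^α, the function J(z)f satisfies ‖J(z)f‖_α ≤ (2/(|Γ(z)|·Re(z))) · ‖f‖_α. -/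
/-!
Substituting `r = t - u` writes `∫₀ᵗ (t-u)^(z-1) f(u) du` as `∫₀ᵗ r^(z-1) f(t-r) dr`. For `s ≤ t`
the difference of the values at `t` and `s` splits into `∫₀ˢ r^(z-1) (f(t-r) - f(s-r)) dr` and
`∫ₛᵗ r^(z-1) f(t-r) dr`. In both integrands the second factor is at most `K (t-s)^α` (for the
second one because `f 0 = 0`), and `∫ r^(Re z - 1)` over a subinterval of `[0,1]` is at most
`1 / Re z`.
-/

open MeasureTheory Set Filter Topology intervalIntegral

noncomputable def riemannLiouville (z : ℂ) (f : ℝ → ℂ) (t : ℝ) : ℂ :=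
  1 / Complex.Gamma z * ∫ s in (0 : ℝ)..t, ((t - s : ℝ) : ℂ) ^ (z - 1) * f s

theorem continuousOn_of_norm_sub_le_mul_dist_rpow {X E : Type*} [PseudoMetricSpace X]
    [SeminormedAddCommGroup E] {f : X → E} {S : Set X} {K α : ℝ} (hα : 0 < α)
    (hK : ∀ x ∈ S, ∀ y ∈ S, ‖f x - f y‖ ≤ K * dist x y ^ α) : ContinuousOn f S := by
  intro x hx
  rw [ContinuousWithinAt, tendsto_iff_norm_sub_tendsto_zero]
  have hlim : Tendsto (fun y => K * dist y x ^ α) (𝓝[S] x) (𝓝 0) := by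
    have : Continuous fun y => K * dist y x ^ α :=
      continuous_const.mul ((continuous_id.dist continuous_const).rpow_const fun _ => Or.inr hα.le)
    simpa [Real.zero_rpow hα.ne'] using (this.tendsto x).mono_left nhdsWithin_le_nhds
  exact squeeze_zero' (Eventually.of_forall fun _ => norm_nonneg _)
    (eventually_nhdsWithin_of_forall fun y hy => hK y hy x hx) hlim

theorem intervalIntegral_sub_cpow_mul_eq (w : ℂ) (f : ℝ → ℂ) (t : ℝ) :
    ∫ u in (0 : ℝ)..t, ((t - u : ℝ) : ℂ) ^ w * f u
      = ∫ r in (0 : ℝ)..t, (r : ℂ) ^ w * f (t - r) := by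
  simpa only [sub_sub_cancel, sub_self, sub_zero] using
    integral_comp_sub_left (a := 0) (b := t) (fun r : ℝ => (r : ℂ) ^ w * f (t - r)) t

theorem norm_integral_cpow_mul_le {z : ℂ} (hz : 0 < z.re) {h : ℝ → ℂ} {a b C : ℝ} (ha : 0 ≤ a)
    (hab : a ≤ b) (hb : b ≤ 1) (hC : 0 ≤ C) (hh : ∀ r ∈ Ioc a b, ‖h r‖ ≤ C) :
    ‖∫ r in a..b, (r : ℂ) ^ (z - 1) * h r‖ ≤ C / z.re := by
  have hre : -1 < z.re - 1 := by linarith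
  have hkernel : ∀ r ∈ Ioc a b, ‖(r : ℂ) ^ (z - 1) * h r‖ ≤ r ^ (z.re - 1) * C := by
    intro r hr
    have hr0 : 0 < r := ha.trans_lt hr.1
    rw [norm_mul, Complex.norm_cpow_eq_rpow_re_of_pos hr0, Complex.sub_re, Complex.one_re]
    exact mul_le_mul_of_nonneg_left (hh r hr) (Real.rpow_nonneg hr0.le _)
  have hbound : b ^ z.re - a ^ z.re ≤ 1 := by
    have := Real.rpow_le_one (ha.trans hab) hb hz.le
    have := Real.rpow_nonneg ha z.re
    linarith
  calc ‖∫ r in a..b, (r : ℂ) ^ (z - 1) * h r‖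
      ≤ ∫ r in a..b, r ^ (z.re - 1) * C :=
        norm_integral_le_of_norm_le hab (ae_of_all _ hkernel)
          ((intervalIntegral.intervalIntegrable_rpow' hre).mul_const C)
    _ = (b ^ z.re - a ^ z.re) / z.re * C := by
        rw [intervalIntegral.integral_mul_const, integral_rpow (Or.inl hre), sub_add_cancel]
    _ ≤ 1 / z.re * C := by gcongr
    _ = C / z.re := by ring

theorem norm_integral_cpow_mul_comp_sub_sub_le {z : ℂ} (hz : 0 < z.re) {f : ℝ → ℂ} {K α : ℝ}
    (hα : 0 ≤ α) (hf0 : f 0 = 0) (hK0 : 0 ≤ K)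
    (hK : ∀ t ∈ Icc (0 : ℝ) 1, ∀ s ∈ Icc (0 : ℝ) 1, ‖f t - f s‖ ≤ K * |t - s| ^ α)
    (hf : ContinuousOn f (Icc 0 1)) {s t : ℝ} (hs : 0 ≤ s) (hst : s ≤ t) (ht : t ≤ 1) :
    ‖(∫ r in (0 : ℝ)..t, (r : ℂ) ^ (z - 1) * f (t - r))
        - ∫ r in (0 : ℝ)..s, (r : ℂ) ^ (z - 1) * f (s - r)‖ ≤ 2 * (K * (t - s) ^ α) / z.re := by
  have hint : ∀ {b a₁ a₂ : ℝ}, b ≤ 1 → 0 ≤ a₁ → a₁ ≤ a₂ → a₂ ≤ b →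
      IntervalIntegrable (fun r => (r : ℂ) ^ (z - 1) * f (b - r)) volume a₁ a₂ := by
    intro b a₁ a₂ hb h₁ h₁₂ h₂
    have hre : -1 < (z - 1).re := by rw [Complex.sub_re, Complex.one_re]; linarith
    refine (intervalIntegrable_cpow' hre).mul_continuousOn (hf.comp (by fun_prop) fun r hr => ?_)
    obtain ⟨hr₁, hr₂⟩ : r ∈ Icc a₁ a₂ := uIcc_of_le h₁₂ ▸ hr
    exact ⟨by linarith, by linarith⟩
  have hC : 0 ≤ K * (t - s) ^ α := mul_nonneg hK0 (Real.rpow_nonneg (by linarith) _)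
  have hfirst : ∀ r ∈ Ioc 0 s, ‖f (t - r) - f (s - r)‖ ≤ K * (t - s) ^ α := by
    rintro r ⟨hr0, hrs⟩
    simpa [abs_of_nonneg (sub_nonneg.2 hst)] using
      hK (t - r) ⟨by linarith, by linarith⟩ (s - r) ⟨by linarith, by linarith⟩
  have hsecond : ∀ r ∈ Ioc s t, ‖f (t - r)‖ ≤ K * (t - s) ^ α := by
    rintro r ⟨hsr, hrt⟩
    have := hK (t - r) ⟨by linarith, by linarith⟩ 0 ⟨le_rfl, zero_le_one⟩
    rw [hf0, sub_zero, sub_zero, abs_of_nonneg (by linarith)] at this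
    exact this.trans (by gcongr)
  have hsplit : (∫ r in (0 : ℝ)..s, (r : ℂ) ^ (z - 1) * (f (t - r) - f (s - r)))
      = (∫ r in (0 : ℝ)..s, (r : ℂ) ^ (z - 1) * f (t - r))
        - ∫ r in (0 : ℝ)..s, (r : ℂ) ^ (z - 1) * f (s - r) := by
    simp_rw [mul_sub]
    exact integral_sub (hint ht le_rfl hs (by linarith)) (hint (by linarith) le_rfl hs le_rfl)
  calc _ = ‖(∫ r in (0 : ℝ)..s, (r : ℂ) ^ (z - 1) * (f (t - r) - f (s - r)))
          + ∫ r in s..t, (r : ℂ) ^ (z - 1) * f (t - r)‖ := by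
        rw [hsplit, ← integral_add_adjacent_intervals (hint ht le_rfl hs (by linarith))
          (hint ht hs hst le_rfl)]
        congr 1
        ring
    _ ≤ K * (t - s) ^ α / z.re + K * (t - s) ^ α / z.re :=
        (norm_add_le _ _).trans (add_le_add
          (norm_integral_cpow_mul_le hz le_rfl hs (by linarith) hC hfirst)
          (norm_integral_cpow_mul_le hz hs hst ht hC hsecond))
    _ = 2 * (K * (t - s) ^ α) / z.re := by ring

theorem norm_riemannLiouville_sub_le {z : ℂ} (hz : 0 < z.re) {f : ℝ → ℂ} {K α : ℝ}
    (hα : 0 ≤ α) (hf0 : f 0 = 0) (hK0 : 0 ≤ K)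
    (hK : ∀ t ∈ Icc (0 : ℝ) 1, ∀ s ∈ Icc (0 : ℝ) 1, ‖f t - f s‖ ≤ K * |t - s| ^ α)
    (hf : ContinuousOn f (Icc 0 1)) {s t : ℝ} (hs : s ∈ Icc (0 : ℝ) 1) (ht : t ∈ Icc (0 : ℝ) 1) :
    ‖riemannLiouville z f t - riemannLiouville z f s‖
      ≤ 2 / (‖Complex.Gamma z‖ * z.re) * K * |t - s| ^ α := by
  wlog hst : s ≤ t generalizing s t
  · rw [norm_sub_rev, abs_sub_comm]
    exact this ht hs (le_of_not_ge hst)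
  have hI := norm_integral_cpow_mul_comp_sub_sub_le hz hα hf0 hK0 hK hf hs.1 hst ht.2
  rw [riemannLiouville, riemannLiouville, ← mul_sub, norm_mul, norm_div, norm_one,
    intervalIntegral_sub_cpow_mul_eq, intervalIntegral_sub_cpow_mul_eq,
    abs_of_nonneg (sub_nonneg.2 hst)]
  calc 1 / ‖Complex.Gamma z‖ * ‖_‖ ≤ 1 / ‖Complex.Gamma z‖ * (2 * (K * (t - s) ^ α) / z.re) := by
        gcongr
    _ = 2 / (‖Complex.Gamma z‖ * z.re) * K * (t - s) ^ α := by ring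

theorem stmt_12_general (α : ℝ) (hα0 : 0 < α) (z : ℂ) (hz : 0 < z.re)
    (f : ℝ → ℂ) (hf0 : f 0 = 0) (K : ℝ)
    (hK : ∀ t ∈ Set.Icc (0 : ℝ) 1, ∀ s ∈ Set.Icc (0 : ℝ) 1,
      ‖f t - f s‖ ≤ K * |t - s| ^ α)
    (J : ℂ → (ℝ → ℂ) → ℝ → ℂ)
    (hJ : J = fun γ g t =>
      (1 / Complex.Gamma γ) * ∫ s in (0 : ℝ)..t, (((t - s : ℝ)) : ℂ) ^ (γ - 1) * g s) :
    ∀ t ∈ Set.Icc (0 : ℝ) 1, ∀ s ∈ Set.Icc (0 : ℝ) 1,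
      ‖J z f t - J z f s‖
        ≤ (2 / (‖Complex.Gamma z‖ * z.re)) * K * |t - s| ^ α := by
  have hK0 : 0 ≤ K := by
    simpa using (norm_nonneg _).trans
      (hK 1 (right_mem_Icc.2 zero_le_one) 0 (left_mem_Icc.2 zero_le_one))
  have hf : ContinuousOn f (Icc 0 1) :=
    continuousOn_of_norm_sub_le_mul_dist_rpow hα0 fun x hx y hy => by
      simpa only [Real.dist_eq] using hK x hx y hy
  subst hJ
  exact fun t ht s hs => norm_riemannLiouville_sub_le hz hα0.le hf0 hK0 hK hf hs ht

/-- Hölder seminorm bound for the Riemann–Liouville operator on `Lip_0^α[0,1]`: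
`‖J(z)f‖_α ≤ (2/(|Γ(z)|·Re z))·‖f‖_α`. -/
theorem stmt_12 (α : ℝ) (hα0 : 0 < α) (hα1 : α < 1) (z : ℂ) (hz : 0 < z.re)
    (f : ℝ → ℂ) (hf0 : f 0 = 0) (K : ℝ)
    (hK : ∀ t ∈ Set.Icc (0 : ℝ) 1, ∀ s ∈ Set.Icc (0 : ℝ) 1,
      ‖f t - f s‖ ≤ K * |t - s| ^ α)
    (J : ℂ → (ℝ → ℂ) → ℝ → ℂ)
    (hJ : J = fun γ g t =>
      (1 / Complex.Gamma γ) * ∫ s in (0 : ℝ)..t, (((t - s : ℝ)) : ℂ) ^ (γ - 1) * g s) :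
    ∀ t ∈ Set.Icc (0 : ℝ) 1, ∀ s ∈ Set.Icc (0 : ℝ) 1,
      ‖J z f t - J z f s‖
        ≤ (2 / (‖Complex.Gamma z‖ * z.re)) * K * |t - s| ^ α :=
  stmt_12_general α hα0 z hz f hf0 K hK J hJ
end

section
/- Let E = ℓ²(ℕ) and for z ∈ ℂ with |arg z| < π/4 define T(z)(xₙ) = (exp((-n + in + i·log(n+1))·z)·xₙ)ₙ. For the lower boundary values z = t·e^(-iπ/4), t ≥ 0, one has ‖T(t e^(-iπ/4))(xₙ)‖² = Σₙ (n+1)^(2t/√2) |xₙ|², whenever this sum is finite; in particular T(t e^(-iπ/4)) is an unbounded operator on ℓ²(ℕ) for every t > 0. -/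
open scoped ENNReal

/-!
Since `e^(-iπ/4) = (1 - i)/√2`, the exponent `(-n + in + i log(n+1)) t e^(-iπ/4)` has real part
`t log(n+1)/√2`, so `T(t e^(-iπ/4))` multiplies `|xₙ|` by `(n+1)^(t/√2)`. For `t > 0` these weights
are unbounded, and the unit vectors `eₙ` show that no constant bounds the weighted sum.
-/

open Complex in
theorem Complex.exp_neg_pi_div_four_mul_I :
    exp (-((Real.pi / 4 : ℝ) : ℂ) * I) = ((Real.sqrt 2 / 2 : ℝ) : ℂ) * (1 - I) := by
  rw [← ofReal_neg, exp_mul_I, ← ofReal_cos, ← ofReal_sin, Real.cos_neg, Real.sin_neg,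
    Real.cos_pi_div_four, Real.sin_pi_div_four]
  push_cast
  ring

theorem Complex.norm_exp_mul_exp_neg_pi_div_four_mul_I (w : ℂ) (t : ℝ) :
    ‖Complex.exp (w * ((t : ℂ) * Complex.exp (-((Real.pi / 4 : ℝ) : ℂ) * Complex.I)))‖
      = Real.exp (t * (w.re + w.im) / Real.sqrt 2) := by
  have hsqrt : Real.sqrt 2 * Real.sqrt 2 = 2 := Real.mul_self_sqrt zero_le_two
  rw [Complex.norm_exp, Complex.exp_neg_pi_div_four_mul_I]
  congr 1
  simp only [Complex.mul_re, Complex.mul_im, Complex.ofReal_re, Complex.ofReal_im,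
    Complex.sub_re, Complex.sub_im, Complex.one_re, Complex.one_im, Complex.I_re, Complex.I_im]
  field_simp
  linear_combination t * (w.re + w.im) * hsqrt

theorem ENNReal.not_exists_weighted_tsum_le_of_not_bddAbove {ι : Type*} {w : ι → ℝ}
    (hw : ¬ BddAbove (Set.range w)) :
    ¬ ∃ C : ℝ≥0∞, C ≠ ⊤ ∧ ∀ x : ι → ℂ,
      ∑' i, ENNReal.ofReal (w i * ‖x i‖ ^ 2) ≤ C * ∑' i, ENNReal.ofReal (‖x i‖ ^ 2) := by
  classical
  rintro ⟨C, hC, hbound⟩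
  obtain ⟨i, hi⟩ : ∃ i, C.toReal < w i := by
    simp only [bddAbove_def, Set.forall_mem_range, not_exists, not_forall, not_le] at hw
    exact hw C.toReal
  have hsingle := hbound (Pi.single i 1)
  rw [tsum_eq_single i (fun j hj => by simp [hj]), tsum_eq_single i (fun j hj => by simp [hj])]
    at hsingle
  simp only [Pi.single_eq_same, norm_one, one_pow, mul_one, ENNReal.ofReal_one] at hsingle
  linarith [(ENNReal.ofReal_le_iff_le_toReal hC).mp hsingle]

theorem not_bddAbove_range_natCast_add_one_rpow {a : ℝ} (ha : 0 < a) :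
    ¬ BddAbove (Set.range fun n : ℕ => ((n : ℝ) + 1) ^ a) :=
  Filter.not_bddAbove_of_tendsto_atTop <| (tendsto_rpow_atTop ha).comp <|
    Filter.tendsto_atTop_add_const_right _ 1 tendsto_natCast_atTop_atTop

theorem stmt_14_general (t : ℝ) :
    (∀ x : ℕ → ℂ,
      ∑' n : ℕ, ENNReal.ofReal
          (
            ‖Complex.exp ((-(n : ℂ) + (n : ℂ) * Complex.I +
                (Real.log ((n : ℝ) + 1) : ℂ) * Complex.I) *
              ((t : ℂ) * Complex.exp (-((Real.pi / 4 : ℝ) : ℂ) * Complex.I))) * x n‖ ^ 2)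
        = ∑' n : ℕ, ENNReal.ofReal
            (((n : ℝ) + 1) ^ (2 * t / Real.sqrt 2) * ‖x n‖ ^ 2)) ∧
    (0 < t → ¬ ∃ C : ℝ≥0∞, C ≠ ⊤ ∧ ∀ x : ℕ → ℂ,
      ∑' n : ℕ, ENNReal.ofReal
          (((n : ℝ) + 1) ^ (2 * t / Real.sqrt 2) * ‖x n‖ ^ 2)
        ≤ C * ∑' n : ℕ, ENNReal.ofReal (‖x n‖ ^ 2)) := by
  refine ⟨fun x => tsum_congr fun n => ?_, fun ht =>
    ENNReal.not_exists_weighted_tsum_le_of_not_bddAbove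
      (not_bddAbove_range_natCast_add_one_rpow (by positivity))⟩
  have hpos : (0 : ℝ) < (n : ℝ) + 1 := by positivity
  have hnorm : ‖Complex.exp ((-(n : ℂ) + (n : ℂ) * Complex.I +
        (Real.log ((n : ℝ) + 1) : ℂ) * Complex.I) *
      ((t : ℂ) * Complex.exp (-((Real.pi / 4 : ℝ) : ℂ) * Complex.I)))‖
      = ((n : ℝ) + 1) ^ (t / Real.sqrt 2) := by
    rw [Complex.norm_exp_mul_exp_neg_pi_div_four_mul_I, Real.rpow_def_of_pos hpos]
    simp only [Complex.add_re, Complex.add_im, Complex.neg_re, Complex.neg_im,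
      Complex.mul_re, Complex.mul_im, Complex.natCast_re, Complex.natCast_im,
      Complex.ofReal_re, Complex.ofReal_im, Complex.I_re, Complex.I_im]
    ring_nf
  rw [norm_mul, hnorm, mul_pow, ← Real.rpow_natCast _ 2, ← Real.rpow_mul hpos.le]
  ring_nf

/-- Lower boundary values `z = t e^(-iπ/4)` of the diagonal semigroup
`T(z)(xₙ) = (exp((-n+in+i log(n+1))z) xₙ)` on `ℓ²(ℕ)`: the norm identity
`‖T(te^(-iπ/4))x‖² = Σ (n+1)^(2t/√2)|xₙ|²`, and unboundedness for `t > 0`. -/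
theorem stmt_14 (t : ℝ) (ht : 0 ≤ t) :
    (∀ x : ℕ → ℂ,
      ∑' n : ℕ, ENNReal.ofReal
          (
            ‖Complex.exp ((-(n : ℂ) + (n : ℂ) * Complex.I +
                (Real.log ((n : ℝ) + 1) : ℂ) * Complex.I) *
              ((t : ℂ) * Complex.exp (-((Real.pi / 4 : ℝ) : ℂ) * Complex.I))) * x n‖ ^ 2)
        = ∑' n : ℕ, ENNReal.ofReal
            (((n : ℝ) + 1) ^ (2 * t / Real.sqrt 2) * ‖x n‖ ^ 2)) ∧
    (0 < t → ¬ ∃ C : ℝ≥0∞, C ≠ ⊤ ∧ ∀ x : ℕ → ℂ,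
      ∑' n : ℕ, ENNReal.ofReal
          (((n : ℝ) + 1) ^ (2 * t / Real.sqrt 2) * ‖x n‖ ^ 2)
        ≤ C * ∑' n : ℕ, ENNReal.ofReal (‖x n‖ ^ 2)) :=
  stmt_14_general t
end
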